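/- arXiv:2204.03036 — 5 statements merged into one kernel-verified Lean document; each statement's English description precedes it below -/
import Mathlib

section
/- The Average Value-at-Risk AV@R_α(Z) := inf_{t∈ℝ} ( t + (1/α) E[max(Z-t, 0)] ), for α ∈ (0,1], is a finite coherent risk measure on L¹(Ω,ℝ): it is convex, monotone with respect to almost-sure order, translation invariant, and positively homogeneous. -/
open MeasureTheory Pointwise

/-- The Average Value-at-Risk at level `α`:
`AV@R_α(Z) = inf_{t ∈ ℝ} ( t + α⁻¹ E[(Z - t)⁺] )`. -/
noncomputable def avar {Ω : Type*} [MeasurableSpace Ω] (μ : Measure Ω)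
    (α : ℝ) (Z : Lp ℝ 1 μ) : ℝ :=
  sInf {x : ℝ | ∃ t : ℝ, x = t + α⁻¹ * ∫ ω, max (Z ω - t) 0 ∂μ}

section aux

variable {Ω : Type*} [MeasurableSpace Ω] {μ : Measure Ω}

lemma avar_integrable [IsFiniteMeasure μ] (Z : Lp ℝ 1 μ) (t : ℝ) :
    Integrable (fun ω => max (Z ω - t) 0) μ := by
  have h := (L1.integrable_coeFn Z).sub (integrable_const t)
  exact h.pos_part

lemma avar_setNonempty (α : ℝ) (Z : Lp ℝ 1 μ) :
    {x : ℝ | ∃ t : ℝ, x = t + α⁻¹ * ∫ ω, max (Z ω - t) 0 ∂μ}.Nonempty :=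
  ⟨(0 : ℝ) + α⁻¹ * ∫ ω, max (Z ω - 0) 0 ∂μ, 0, rfl⟩

lemma avar_lowerBound [IsProbabilityMeasure μ] {α : ℝ} (hα : α ∈ Set.Ioc (0 : ℝ) 1)
    (Z : Lp ℝ 1 μ) :
    ∀ x ∈ {x : ℝ | ∃ t : ℝ, x = t + α⁻¹ * ∫ ω, max (Z ω - t) 0 ∂μ},
      (∫ ω, Z ω ∂μ) ≤ x := by
  rintro x ⟨t, rfl⟩
  have hI0 : 0 ≤ ∫ ω, max (Z ω - t) 0 ∂μ :=
    integral_nonneg fun ω => le_max_right _ _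
  have hinv : (1 : ℝ) ≤ α⁻¹ := (one_le_inv_iff₀).2 ⟨hα.1, hα.2⟩
  have h1 : (∫ ω, (Z ω - t) ∂μ) ≤ ∫ ω, max (Z ω - t) 0 ∂μ :=
    integral_mono ((L1.integrable_coeFn Z).sub (integrable_const t))
      (avar_integrable Z t) (fun ω => le_max_left _ _)
  have h2 : (∫ ω, (Z ω - t) ∂μ) = (∫ ω, Z ω ∂μ) - t := by
    rw [integral_sub (L1.integrable_coeFn Z) (integrable_const t), integral_const]
    simp
  nlinarith [mul_le_mul_of_nonneg_right hinv hI0]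

lemma avar_bddBelow [IsProbabilityMeasure μ] {α : ℝ} (hα : α ∈ Set.Ioc (0 : ℝ) 1)
    (Z : Lp ℝ 1 μ) :
    BddBelow {x : ℝ | ∃ t : ℝ, x = t + α⁻¹ * ∫ ω, max (Z ω - t) 0 ∂μ} :=
  ⟨∫ ω, Z ω ∂μ, avar_lowerBound hα Z⟩

lemma sInf_image_add (S : Set ℝ) (a : ℝ) (h : S.Nonempty) (hb : BddBelow S) :
    sInf ((fun x => x + a) '' S) = sInf S + a := by
  obtain ⟨b, hbb⟩ := hb
  have hbim : BddBelow ((fun x => x + a) '' S) := by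
    refine ⟨b + a, ?_⟩
    rintro y ⟨x, hx, rfl⟩
    exact add_le_add_left (hbb hx) a
  apply le_antisymm
  · have : sInf ((fun x => x + a) '' S) - a ≤ sInf S := by
      apply le_csInf h
      intro x hx
      have h2 : sInf ((fun x => x + a) '' S) ≤ x + a := csInf_le hbim ⟨x, hx, rfl⟩
      linarith
    linarith
  · apply le_csInf (h.image _)
    rintro y ⟨x, hx, rfl⟩
    exact add_le_add_left (csInf_le ⟨b, hbb⟩ hx) a

end aux

/-- For `α ∈ (0,1]`, the Average Value-at-Risk is a finite coherent risk measure on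
`L¹(Ω,ℝ)`: convex, monotone with respect to almost-sure order, translation invariant,
and positively homogeneous. -/
theorem avar_is_coherent_risk_measure
    {Ω : Type*} [MeasurableSpace Ω] (μ : Measure Ω) [IsProbabilityMeasure μ]
    (α : ℝ) (hα : α ∈ Set.Ioc (0 : ℝ) 1) :
    (∀ (Z₁ Z₂ : Lp ℝ 1 μ) (l : ℝ), 0 ≤ l → l ≤ 1 →
      avar μ α (l • Z₁ + (1 - l) • Z₂) ≤ l * avar μ α Z₁ + (1 - l) * avar μ α Z₂) ∧
    (∀ Z₁ Z₂ : Lp ℝ 1 μ, (∀ᵐ ω ∂μ, Z₁ ω ≤ Z₂ ω) → avar μ α Z₁ ≤ avar μ α Z₂) ∧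
    (∀ (Z : Lp ℝ 1 μ) (a : ℝ), avar μ α (Z + Lp.const 1 μ a) = avar μ α Z + a) ∧
    (∀ (Z : Lp ℝ 1 μ) (a : ℝ), 0 < a → avar μ α (a • Z) = a * avar μ α Z) := by
  have hαpos := hα.1
  have hinv0 : (0 : ℝ) ≤ α⁻¹ := inv_nonneg.2 hαpos.le
  refine ⟨?_, ?_, ?_, ?_⟩
  · -- convexity
    intro Z₁ Z₂ l hl0 hl1
    set S₁ := {x : ℝ | ∃ t : ℝ, x = t + α⁻¹ * ∫ ω, max (Z₁ ω - t) 0 ∂μ}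
    set S₂ := {x : ℝ | ∃ t : ℝ, x = t + α⁻¹ * ∫ ω, max (Z₂ ω - t) 0 ∂μ}
    have key : ∀ x₁ ∈ S₁, ∀ x₂ ∈ S₂,
        avar μ α (l • Z₁ + (1 - l) • Z₂) ≤ l * x₁ + (1 - l) * x₂ := by
      rintro x₁ ⟨t₁, rfl⟩ x₂ ⟨t₂, rfl⟩
      set Zm := l • Z₁ + (1 - l) • Z₂
      set t := l * t₁ + (1 - l) * t₂ with ht
      have hmem : (t + α⁻¹ * ∫ ω, max (Zm ω - t) 0 ∂μ) ∈
          {x : ℝ | ∃ s : ℝ, x = s + α⁻¹ * ∫ ω, max (Zm ω - s) 0 ∂μ} := ⟨t, rfl⟩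
      have h1 : avar μ α Zm ≤ t + α⁻¹ * ∫ ω, max (Zm ω - t) 0 ∂μ :=
        csInf_le (avar_bddBelow hα Zm) hmem
      have hcoe : (fun ω => (Zm : Ω → ℝ) ω) =ᵐ[μ]
          (fun ω => l * Z₁ ω + (1 - l) * Z₂ ω) := by
        filter_upwards [Lp.coeFn_add (l • Z₁) ((1 - l) • Z₂), Lp.coeFn_smul l Z₁,
          Lp.coeFn_smul (1 - l) Z₂] with ω h₁ h₂ h₃
        simp only [Zm, h₁, Pi.add_apply, h₂, h₃, Pi.smul_apply, smul_eq_mul]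
      have hIle : (∫ ω, max (Zm ω - t) 0 ∂μ) ≤
          l * (∫ ω, max (Z₁ ω - t₁) 0 ∂μ) + (1 - l) * (∫ ω, max (Z₂ ω - t₂) 0 ∂μ) := by
        have heq : (∫ ω, max (Zm ω - t) 0 ∂μ) =
            ∫ ω, max (l * Z₁ ω + (1 - l) * Z₂ ω - t) 0 ∂μ := by
          apply integral_congr_ae
          filter_upwards [hcoe] with ω h
          rw [h]
        rw [heq]
        have hmono : (∫ ω, max (l * Z₁ ω + (1 - l) * Z₂ ω - t) 0 ∂μ) ≤
            ∫ ω, (l * max (Z₁ ω - t₁) 0 + (1 - l) * max (Z₂ ω - t₂) 0) ∂μ := by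
          apply integral_mono
          · have : Integrable (fun ω => (Zm : Ω → ℝ) ω - t) μ :=
              (L1.integrable_coeFn Zm).sub (integrable_const t)
            have := this.pos_part
            exact (integrable_congr (by filter_upwards [hcoe] with ω h; rw [h])).1 this
          · exact (((avar_integrable Z₁ t₁).const_mul l).add
              ((avar_integrable Z₂ t₂).const_mul (1 - l)))
          · intro ω
            show max _ 0 ≤ l * max (Z₁ ω - t₁) 0 + (1 - l) * max (Z₂ ω - t₂) 0
            have hre : l * Z₁ ω + (1 - l) * Z₂ ω - t =
                l * (Z₁ ω - t₁) + (1 - l) * (Z₂ ω - t₂) := by ring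
            apply max_le
            · rw [hre]
              have a1 : l * (Z₁ ω - t₁) ≤ l * max (Z₁ ω - t₁) 0 :=
                mul_le_mul_of_nonneg_left (le_max_left _ _) hl0
              have a2 : (1 - l) * (Z₂ ω - t₂) ≤ (1 - l) * max (Z₂ ω - t₂) 0 :=
                mul_le_mul_of_nonneg_left (le_max_left _ _) (by linarith)
              linarith
            · have a1 : 0 ≤ l * max (Z₁ ω - t₁) 0 :=
                mul_nonneg hl0 (le_max_right _ _)
              have a2 : 0 ≤ (1 - l) * max (Z₂ ω - t₂) 0 :=
                mul_nonneg (by linarith) (le_max_right _ _)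
              linarith
        calc (∫ ω, max (l * Z₁ ω + (1 - l) * Z₂ ω - t) 0 ∂μ)
            ≤ ∫ ω, (l * max (Z₁ ω - t₁) 0 + (1 - l) * max (Z₂ ω - t₂) 0) ∂μ := hmono
          _ = l * (∫ ω, max (Z₁ ω - t₁) 0 ∂μ) + (1 - l) * (∫ ω, max (Z₂ ω - t₂) 0 ∂μ) := by
              rw [integral_add ((avar_integrable Z₁ t₁).const_mul l)
                ((avar_integrable Z₂ t₂).const_mul (1 - l)),
                integral_const_mul, integral_const_mul]
      calc avar μ α Zm ≤ t + α⁻¹ * ∫ ω, max (Zm ω - t) 0 ∂μ := h1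
        _ ≤ t + α⁻¹ * (l * (∫ ω, max (Z₁ ω - t₁) 0 ∂μ)
              + (1 - l) * (∫ ω, max (Z₂ ω - t₂) 0 ∂μ)) := by
            exact add_le_add_right (mul_le_mul_of_nonneg_left hIle hinv0) t
        _ = l * (t₁ + α⁻¹ * ∫ ω, max (Z₁ ω - t₁) 0 ∂μ)
              + (1 - l) * (t₂ + α⁻¹ * ∫ ω, max (Z₂ ω - t₂) 0 ∂μ) := by ring
    apply le_of_forall_pos_le_add
    intro ε hε
    obtain ⟨x₁, hx₁, hlt₁⟩ := Real.lt_sInf_add_pos (avar_setNonempty α Z₁) (half_pos hε)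
    obtain ⟨x₂, hx₂, hlt₂⟩ := Real.lt_sInf_add_pos (avar_setNonempty α Z₂) (half_pos hε)
    have h := key x₁ hx₁ x₂ hx₂
    have b1 : l * x₁ ≤ l * (sInf S₁ + ε / 2) :=
      mul_le_mul_of_nonneg_left hlt₁.le hl0
    have b2 : (1 - l) * x₂ ≤ (1 - l) * (sInf S₂ + ε / 2) :=
      mul_le_mul_of_nonneg_left hlt₂.le (by linarith)
    have : avar μ α Z₁ = sInf S₁ := rfl
    have : avar μ α Z₂ = sInf S₂ := rfl
    have hε2 : l * (ε / 2) + (1 - l) * (ε / 2) = ε / 2 := by ring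
    calc avar μ α (l • Z₁ + (1 - l) • Z₂) ≤ l * x₁ + (1 - l) * x₂ := h
      _ ≤ l * (sInf S₁ + ε / 2) + (1 - l) * (sInf S₂ + ε / 2) := by linarith
      _ = l * sInf S₁ + (1 - l) * sInf S₂ + ε / 2 := by ring
      _ ≤ l * avar μ α Z₁ + (1 - l) * avar μ α Z₂ + ε := by
          simp only [avar]; linarith
  · -- monotonicity
    intro Z₁ Z₂ hle
    apply le_csInf (avar_setNonempty α Z₂)
    rintro x ⟨t, rfl⟩
    have h1 : avar μ α Z₁ ≤ t + α⁻¹ * ∫ ω, max (Z₁ ω - t) 0 ∂μ :=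
      csInf_le (avar_bddBelow hα Z₁) ⟨t, rfl⟩
    have h2 : (∫ ω, max (Z₁ ω - t) 0 ∂μ) ≤ ∫ ω, max (Z₂ ω - t) 0 ∂μ := by
      apply integral_mono_ae (avar_integrable Z₁ t) (avar_integrable Z₂ t)
      filter_upwards [hle] with ω h
      exact max_le_max (by linarith) le_rfl
    calc avar μ α Z₁ ≤ t + α⁻¹ * ∫ ω, max (Z₁ ω - t) 0 ∂μ := h1
      _ ≤ t + α⁻¹ * ∫ ω, max (Z₂ ω - t) 0 ∂μ :=
          add_le_add_right (mul_le_mul_of_nonneg_left h2 hinv0) t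
  · -- translation invariance
    intro Z a
    have hshift : ∀ t : ℝ, (∫ ω, max ((Z + Lp.const 1 μ a) ω - t) 0 ∂μ)
        = ∫ ω, max (Z ω - (t - a)) 0 ∂μ := by
      intro t
      apply integral_congr_ae
      filter_upwards [Lp.coeFn_add Z (Lp.const 1 μ a), Lp.coeFn_const 1 μ a] with ω h₁ h₂
      rw [h₁]
      simp only [Pi.add_apply, h₂, Function.const_apply]
      ring_nf
    have hset : {x : ℝ | ∃ t : ℝ, x = t + α⁻¹ * ∫ ω, max ((Z + Lp.const 1 μ a) ω - t) 0 ∂μ}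
        = (fun x => x + a) '' {x : ℝ | ∃ t : ℝ, x = t + α⁻¹ * ∫ ω, max (Z ω - t) 0 ∂μ} := by
      ext x
      constructor
      · rintro ⟨t, rfl⟩
        refine ⟨(t - a) + α⁻¹ * ∫ ω, max (Z ω - (t - a)) 0 ∂μ, ⟨t - a, rfl⟩, ?_⟩
        rw [hshift t]; ring
      · rintro ⟨y, ⟨t, rfl⟩, rfl⟩
        refine ⟨t + a, ?_⟩
        rw [hshift (t + a), add_sub_cancel_right]
        ring

    show sInf _ = _
    rw [hset, sInf_image_add _ a (avar_setNonempty α Z) (avar_bddBelow hα Z)]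
    rfl
  · -- positive homogeneity
    intro Z a ha
    have hscale : ∀ t : ℝ, (∫ ω, max ((a • Z) ω - a * t) 0 ∂μ)
        = a * ∫ ω, max (Z ω - t) 0 ∂μ := by
      intro t
      rw [← integral_const_mul]
      apply integral_congr_ae
      filter_upwards [Lp.coeFn_smul a Z] with ω h
      rw [h]
      simp only [Pi.smul_apply, smul_eq_mul]
      rw [mul_max_of_nonneg _ _ ha.le, mul_zero, mul_sub]
    have hset : {x : ℝ | ∃ t : ℝ, x = t + α⁻¹ * ∫ ω, max ((a • Z) ω - t) 0 ∂μ}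
        = (fun x => a * x) '' {x : ℝ | ∃ t : ℝ, x = t + α⁻¹ * ∫ ω, max (Z ω - t) 0 ∂μ} := by
      ext x
      constructor
      · rintro ⟨t, rfl⟩
        refine ⟨t / a + α⁻¹ * ∫ ω, max (Z ω - t / a) 0 ∂μ, ⟨t / a, rfl⟩, ?_⟩
        have := hscale (t / a)
        rw [mul_div_cancel₀ _ ha.ne'] at this
        rw [this]
        field_simp
      · rintro ⟨y, ⟨t, rfl⟩, rfl⟩
        refine ⟨a * t, ?_⟩
        rw [hscale t]
        ring
    show sInf _ = _
    rw [hset]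
    have himg : (fun x => a * x) '' {x : ℝ | ∃ t : ℝ, x = t + α⁻¹ * ∫ ω, max (Z ω - t) 0 ∂μ}
        = a • {x : ℝ | ∃ t : ℝ, x = t + α⁻¹ * ∫ ω, max (Z ω - t) 0 ∂μ} := by
      rw [← Set.image_smul]
      simp [smul_eq_mul]
    rw [himg, Real.sInf_smul_of_nonneg ha.le, smul_eq_mul]
    rfl
end

section
/- Aumann's convexity principle fails for the Itô integral: let F ⊂ ℝ² be the compact set F = {(x,y) ∈ [0,1]² : y ≤ 1-2x if x ≤ 1/2, and y ≤ 2x-1 if x ≥ 1/2}, and let f ≡ (1/2, 1), which lies in the closed convex hull of F. Then for every measurable selection g : [0,1] → F one has ∫₀¹ ‖f - g(t)‖² dt ≥ 1/5. -/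
open MeasureTheory

/-- The compact "bowtie" set `F ⊂ ℝ²` of the Itô counterexample. -/
def bowtie : Set (ℝ × ℝ) :=
  {p : ℝ × ℝ | p.1 ∈ Set.Icc (0 : ℝ) 1 ∧ p.2 ∈ Set.Icc (0 : ℝ) 1 ∧
    (p.1 ≤ 1 / 2 → p.2 ≤ 1 - 2 * p.1) ∧ (1 / 2 ≤ p.1 → p.2 ≤ 2 * p.1 - 1)}

/-- Aumann's convexity principle fails for the Itô integral: the constant map
`f ≡ (1/2, 1)` lies in the closed convex hull of `F`, yet every measurable selection
`g : [0,1] → F` satisfies `∫₀¹ ‖f - g(t)‖² dt ≥ 1/5` (squared Euclidean distance). -/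
theorem ito_aumann_counterexample (g : ℝ → ℝ × ℝ) (hgm : Measurable g)
    (hg : ∀ t ∈ Set.Icc (0 : ℝ) 1, g t ∈ bowtie) :
    (1 / 2, (1 : ℝ)) ∈ closure (convexHull ℝ bowtie) ∧
    (1 : ℝ) / 5 ≤
      ∫ t in (0 : ℝ)..1, (((1 : ℝ) / 2 - (g t).1) ^ 2 + (1 - (g t).2) ^ 2) := by
  constructor
  · apply subset_closure
    have h0 : ((0 : ℝ), (1 : ℝ)) ∈ bowtie := by
      refine ⟨by norm_num, by norm_num, by norm_num, by norm_num⟩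
    have h1 : ((1 : ℝ), (1 : ℝ)) ∈ bowtie := by
      refine ⟨by norm_num, by norm_num, by norm_num, by norm_num⟩
    have hseg : ((1:ℝ)/2, (1:ℝ)) ∈ segment ℝ ((0:ℝ),(1:ℝ)) ((1:ℝ),(1:ℝ)) :=
      ⟨1/2, 1/2, by norm_num, by norm_num, by norm_num, by
        simp [Prod.ext_iff]; norm_num⟩
    exact segment_subset_convexHull h0 h1 hseg
  · have key : ∀ t ∈ Set.Icc (0:ℝ) 1,
        (1:ℝ)/5 ≤ ((1:ℝ)/2 - (g t).1) ^ 2 + (1 - (g t).2) ^ 2 := by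
      intro t ht
      obtain ⟨⟨hx0, hx1⟩, ⟨hy0, hy1⟩, hl, hr⟩ := hg t ht
      rcases le_total (g t).1 (1/2) with h | h
      · have := hl h
        nlinarith [sq_nonneg ((g t).1 - 1/10), sq_nonneg (1 - (g t).2 - 2 * (g t).1),
          mul_nonneg hx0 (sub_nonneg.2 this)]
      · have := hr h
        nlinarith [sq_nonneg ((g t).1 - 9/10), sq_nonneg (1 - (g t).2 - (2 - 2 * (g t).1)),
          mul_nonneg (sub_nonneg.2 hx1) (sub_nonneg.2 this)]
    have hmeas : Measurable fun t => ((1:ℝ)/2 - (g t).1) ^ 2 + (1 - (g t).2) ^ 2 := by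
      fun_prop
    have hint : IntegrableOn (fun t => ((1:ℝ)/2 - (g t).1) ^ 2 + (1 - (g t).2) ^ 2)
        (Set.Ioc (0:ℝ) 1) := by
      refine Integrable.mono' (integrable_const 2) hmeas.aestronglyMeasurable.restrict ?_
      filter_upwards [ae_restrict_mem measurableSet_Ioc] with t ht
      obtain ⟨⟨hx0, hx1⟩, ⟨hy0, hy1⟩, -, -⟩ := hg t ⟨ht.1.le, ht.2⟩
      rw [Real.norm_eq_abs, abs_of_nonneg (by positivity)]
      nlinarith
    rw [intervalIntegral.integral_of_le (by norm_num : (0:ℝ) ≤ 1)]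
    calc (1:ℝ)/5 = ∫ _ in Set.Ioc (0:ℝ) 1, (1/5 : ℝ) := by simp
      _ ≤ _ := by
        refine setIntegral_mono_on (integrableOn_const (by simp) (by simp))
          hint measurableSet_Ioc fun t ht => key t ⟨ht.1.le, ht.2⟩
end

section
/- Let A ⊂ ℝ^{j+1} be a nonempty convex cone with A ∩ (-∞,0)^{j+1} = ∅, and let B ⊂ ℝʲ be its projection onto the last j coordinates. If B ∩ (-∞,0)ʲ ≠ ∅, then there exists a separating vector (p₀, p₁, …, p_j) ∈ ℝ^{j+1} with (p₀,…,p_j)·a ≥ 0 for all a ∈ A and pᵢ ≥ 0 for all i, and necessarily p₀ ≠ 0. -/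
/-- Nondegeneracy of the multiplier under constraint qualification: let `A ⊆ ℝ × ℝʲ` be a
nonempty convex cone disjoint from the open negative orthant, and let `B` be its projection
onto the last `j` coordinates. If `B` meets the open negative orthant `(-∞,0)ʲ`, then there
exists a separating vector `(p₀, p)` with nonnegative components, `(p₀,p)·a ≥ 0` for all
`a ∈ A`, and necessarily `p₀ ≠ 0`. -/
theorem multiplier_nondegenerate_under_qualification {j : ℕ} (A : Set (ℝ × (Fin j → ℝ)))
    (hAne : A.Nonempty) (hAconv : Convex ℝ A)
    (hAcone : ∀ a ∈ A, ∀ l : ℝ, 0 < l → l • a ∈ A)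
    (hdisj : A ∩ {a : ℝ × (Fin j → ℝ) | a.1 < 0 ∧ ∀ i, a.2 i < 0} = ∅)
    (hqual : ∃ b : Fin j → ℝ, (∃ a₀ : ℝ, (a₀, b) ∈ A) ∧ ∀ i, b i < 0) :
    ∃ (p₀ : ℝ) (p : Fin j → ℝ), p₀ ≠ 0 ∧ 0 ≤ p₀ ∧ (∀ i, 0 ≤ p i) ∧
      ∀ a ∈ A, 0 ≤ p₀ * a.1 + ∑ i, p i * a.2 i := by
  classical
  set N : Set (ℝ × (Fin j → ℝ)) := {a | a.1 < 0 ∧ ∀ i, a.2 i < 0} with hNdef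
  have hNopen : IsOpen N := by
    have h1 : IsOpen {a : ℝ × (Fin j → ℝ) | a.1 < 0} :=
      isOpen_lt continuous_fst continuous_const
    have h2 : ∀ i, IsOpen {a : ℝ × (Fin j → ℝ) | a.2 i < 0} := fun i =>
      isOpen_lt ((continuous_apply i).comp continuous_snd) continuous_const
    have hEq : N = {a : ℝ × (Fin j → ℝ) | a.1 < 0} ∩ ⋂ i, {a | a.2 i < 0} := by
      ext x; simp [hNdef, Set.mem_iInter]
    rw [hEq]
    exact h1.inter (isOpen_iInter_of_finite h2)
  have key : ∀ {x y a b : ℝ}, x < 0 → y < 0 → 0 ≤ a → 0 ≤ b → a + b = 1 → a*x + b*y < 0 := by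
    intro x y a b hx hy ha hb hab
    rcases ha.lt_or_eq with h | h
    · nlinarith
    · nlinarith
  have hNconv : Convex ℝ N := by
    intro x hx y hy a b ha hb hab
    refine ⟨?_, fun i => ?_⟩
    · have := key hx.1 hy.1 ha hb hab
      simpa [smul_eq_mul] using this
    · have := key (hx.2 i) (hy.2 i) ha hb hab
      simpa [smul_eq_mul] using this
  have hdisj' : Disjoint N A := by
    rw [Set.disjoint_iff_inter_eq_empty, Set.inter_comm]
    exact hdisj
  obtain ⟨f, u, hfN, hfA⟩ := geometric_hahn_banach_open hNconv hNopen hAconv hdisj'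
  -- u ≤ 0
  obtain ⟨a, haA⟩ := hAne
  have hu0 : u ≤ 0 := by
    by_contra h
    push_neg at h
    set l : ℝ := u / (2 * (|f a| + 1)) with hl
    have habs : (0:ℝ) < |f a| + 1 := by positivity
    have hlpos : 0 < l := by positivity
    have h1 : u ≤ f (l • a) := hfA _ (hAcone a haA l hlpos)
    rw [map_smul, smul_eq_mul] at h1
    have h2 : l * f a ≤ l * |f a| := by
      have := le_abs_self (f a)
      nlinarith
    rw [hl] at h2
    rw [hl] at h1
    have : u / (2 * (|f a| + 1)) * |f a| < u := by
      rw [div_mul_eq_mul_div, div_lt_iff₀ (by positivity)]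
      nlinarith
    linarith
  -- f nonneg on A
  have hA0 : ∀ x ∈ A, 0 ≤ f x := by
    intro x hx
    by_contra h
    push_neg at h
    have hne : f x ≠ 0 := ne_of_lt h
    set l : ℝ := (|u| + 1) / (-f x) with hl
    have hlpos : 0 < l := div_pos (by positivity) (by linarith)
    have h1 : u ≤ f (l • x) := hfA _ (hAcone x hx l hlpos)
    rw [map_smul, smul_eq_mul] at h1
    have h2 : l * f x = -(|u| + 1) := by
      rw [hl, div_mul_eq_mul_div, div_neg, mul_div_assoc, div_self hne, mul_one]
    rw [h2] at h1
    have := neg_abs_le u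
    linarith
  -- f negative on N
  have hN0 : ∀ x ∈ N, f x < 0 := fun x hx => lt_of_lt_of_le (hfN x hx) hu0
  -- define coefficients
  set p₀ : ℝ := f (1, 0) with hp₀
  set p : Fin j → ℝ := fun i => f (0, Pi.single i 1) with hp
  -- decomposition
  have hdecomp : ∀ x : ℝ × (Fin j → ℝ), f x = p₀ * x.1 + ∑ i, p i * x.2 i := by
    intro x
    have hx : x = (x.1) • ((1:ℝ), (0 : Fin j → ℝ)) + ((0:ℝ), x.2) := by
      ext <;> simp
    set g : (Fin j → ℝ) →ₗ[ℝ] ℝ :=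
      (f : ℝ × (Fin j → ℝ) →ₗ[ℝ] ℝ).comp (LinearMap.inr ℝ ℝ (Fin j → ℝ)) with hg
    have hgx : ∀ y : Fin j → ℝ, f ((0:ℝ), y) = g y := fun y => rfl
    calc f x = f ((x.1) • ((1:ℝ), (0 : Fin j → ℝ)) + ((0:ℝ), x.2)) := by rw [← hx]
      _ = x.1 * f (1, 0) + g x.2 := by rw [map_add, map_smul, smul_eq_mul, hgx]
      _ = p₀ * x.1 + ∑ i, p i * x.2 i := by
          rw [LinearMap.pi_apply_eq_sum_univ g x.2, mul_comm]
          congr 1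
          refine Finset.sum_congr rfl (fun i _ => ?_)
          have hsingle : (fun k => if i = k then (1:ℝ) else 0) = Pi.single i 1 := by
            ext k; by_cases h : i = k <;> simp [Pi.single_apply, h, eq_comm]
          have hpg : g (Pi.single i 1) = p i := (hgx (Pi.single i 1)).symm
          rw [hsingle, smul_eq_mul, hpg, mul_comm]
  -- negative orthant inequality in coefficients
  have horth : ∀ x : Fin j → ℝ, ∀ x₀ : ℝ, x₀ < 0 → (∀ i, x i < 0) →
      p₀ * x₀ + ∑ i, p i * x i < 0 := by
    intro x x₀ h0 hi
    have := hN0 (x₀, x) ⟨h0, hi⟩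
    rwa [hdecomp] at this
  -- p i ≥ 0
  have hpnn : ∀ i, 0 ≤ p i := by
    intro i
    by_contra h
    push_neg at h
    set S : ℝ := ∑ k, p k with hS
    have hne : p i ≠ 0 := ne_of_lt h
    set t : ℝ := (|p₀ + S| + 1) / (-p i) with ht
    have htpos : 0 < t := div_pos (by positivity) (by linarith)
    set x : Fin j → ℝ := fun k => if k = i then -1 - t else -1 with hx
    have hxneg : ∀ k, x k < 0 := by
      intro k; rw [hx]; by_cases hk : k = i <;> simp [hk] <;> linarith
    have hsum : ∑ k, p k * x k = -S - t * p i := by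
      have : ∀ k, p k * x k = -(p k) + (if k = i then -t * p i else 0) := by
        intro k; rw [hx]; by_cases hk : k = i <;> simp [hk] <;> ring
      rw [Finset.sum_congr rfl (fun k _ => this k), Finset.sum_add_distrib,
        Finset.sum_ite_eq' Finset.univ i (fun _ => -t * p i)]
      simp [hS]; ring
    have hlt := horth x (-1) (by norm_num) hxneg
    rw [hsum] at hlt
    have htp : t * (-p i) = |p₀ + S| + 1 := by
      rw [ht, div_mul_eq_mul_div, mul_div_assoc, neg_div_neg_eq, div_self hne, mul_one]
    have := le_abs_self (p₀ + S)
    nlinarith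
  -- p₀ ≥ 0
  have hp₀nn : 0 ≤ p₀ := by
    by_contra h
    push_neg at h
    set S : ℝ := ∑ k, p k with hS
    have hne : p₀ ≠ 0 := ne_of_lt h
    set t : ℝ := (|S| + 1) / (-p₀) with ht
    have htpos : 0 < t := div_pos (by positivity) (by linarith)
    have hlt := horth (fun _ => -1) (-t) (by linarith) (fun _ => by norm_num)
    have hsum : ∑ k, p k * (fun _ => (-1:ℝ)) k = -S := by
      simp [hS, Finset.sum_neg_distrib]
    rw [hsum] at hlt
    have htp : t * (-p₀) = |S| + 1 := by
      rw [ht, div_mul_eq_mul_div, mul_div_assoc, neg_div_neg_eq, div_self hne, mul_one]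
    have := le_abs_self S
    nlinarith
  -- p₀ ≠ 0
  have hp₀ne : p₀ ≠ 0 := by
    intro hzero
    obtain ⟨b, ⟨a₀, hab⟩, hbneg⟩ := hqual
    have h1 : 0 ≤ f (a₀, b) := hA0 _ hab
    rw [hdecomp, hzero] at h1
    simp only [zero_mul, zero_add] at h1
    have hterm : ∀ k, p k * b k ≤ 0 := fun k =>
      mul_nonpos_of_nonneg_of_nonpos (hpnn k) (hbneg k).le
    have hall : ∀ k ∈ Finset.univ, p k * b k = 0 := by
      intro k _
      have hle : ∑ i, p i * b i ≤ 0 := Finset.sum_nonpos (fun i _ => hterm i)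
      have heq : ∑ i, p i * b i = 0 := le_antisymm hle h1
      exact (Finset.sum_eq_zero_iff_of_nonpos (fun i _ => hterm i)).mp heq k (Finset.mem_univ k)
    have hpzero : ∀ k, p k = 0 := by
      intro k
      have := hall k (Finset.mem_univ k)
      rcases mul_eq_zero.mp this with h | h
      · exact h
      · exact absurd h (ne_of_lt (hbneg k))
    have := horth (fun _ => -1) (-1) (by norm_num) (fun _ => by norm_num)
    simp [hzero, hpzero] at this
  exact ⟨p₀, p, hp₀ne, hp₀nn, hpnn, fun x hx => by rw [← hdecomp]; exact hA0 x hx⟩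
end

section
/- Minimax selection of the risk parameter: let X be a nonempty convex compact subset of a Hausdorff topological vector space and G a nonempty convex subset of another Hausdorff topological vector space, and let 𝓗 : X × G → ℝ be bilinear (affine in each variable) and separately continuous. If sup_{g∈G} inf_{ξ∈X} 𝓗(ξ,g) ≤ 0, then there exists ξ* ∈ X such that 𝓗(ξ*, g) ≤ 0 for all g ∈ G. -/
/-- Minimax selection of the risk parameter: if `X` is a nonempty convex compact subset of a
Hausdorff topological vector space, `G` a nonempty convex subset of another Hausdorff
topological vector space, `𝓗` is affine in each variable and separately continuous, and
`sup_{g ∈ G} inf_{ξ ∈ X} 𝓗(ξ,g) ≤ 0`, then there exists `ξ* ∈ X` with `𝓗(ξ*,g) ≤ 0`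
for all `g ∈ G`. -/
theorem minimax_risk_parameter_selection
    {E F : Type*} [AddCommGroup E] [Module ℝ E] [TopologicalSpace E] [T2Space E]
    [IsTopologicalAddGroup E] [ContinuousSMul ℝ E]
    [AddCommGroup F] [Module ℝ F] [TopologicalSpace F] [T2Space F]
    [IsTopologicalAddGroup F] [ContinuousSMul ℝ F]
    (X : Set E) (hXne : X.Nonempty) (hXconv : Convex ℝ X) (hXcomp : IsCompact X)
    (G : Set F) (hGne : G.Nonempty) (hGconv : Convex ℝ G)
    (H : E → F → ℝ)
    (hHcont₁ : ∀ g, Continuous fun ξ => H ξ g)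
    (hHcont₂ : ∀ ξ, Continuous fun g => H ξ g)
    (hHaff₁ : ∀ (ξ₁ ξ₂ : E) (g : F) (a b : ℝ), 0 ≤ a → 0 ≤ b → a + b = 1 →
      H (a • ξ₁ + b • ξ₂) g = a * H ξ₁ g + b * H ξ₂ g)
    (hHaff₂ : ∀ (ξ : E) (g₁ g₂ : F) (a b : ℝ), 0 ≤ a → 0 ≤ b → a + b = 1 →
      H ξ (a • g₁ + b • g₂) = a * H ξ g₁ + b * H ξ g₂)
    (hsupinf : ∀ g ∈ G, sInf ((fun ξ => H ξ g) '' X) ≤ 0) :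
    ∃ ξstar ∈ X, ∀ g ∈ G, H ξstar g ≤ 0 := by
  classical
  -- Finite case: for any finite subset of `G` there is a good `ξ`.
  have key : ∀ s : Finset F, ↑s ⊆ G → ∃ ξ ∈ X, ∀ g ∈ s, H ξ g ≤ 0 := by
    intro s hsG
    by_contra hcon
    push_neg at hcon
    -- Work in the finite-dimensional space `↥s → ℝ`.
    let φ : E → (↥s → ℝ) := fun ξ i => H ξ (i : F)
    have hφcont : Continuous φ := continuous_pi fun i => hHcont₁ (i : F)
    have hφA : ∀ (ξ₁ ξ₂ : E) (a b : ℝ), 0 ≤ a → 0 ≤ b → a + b = 1 →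
        φ (a • ξ₁ + b • ξ₂) = a • φ ξ₁ + b • φ ξ₂ := by
      intro ξ₁ ξ₂ a b ha hb hab
      funext i
      simp only [φ, Pi.add_apply, Pi.smul_apply, smul_eq_mul]
      exact hHaff₁ ξ₁ ξ₂ (i : F) a b ha hb hab
    set A : Set (↥s → ℝ) := φ '' X with hA
    have hAconv : Convex ℝ A := by
      rintro _ ⟨ξ₁, hξ₁, rfl⟩ _ ⟨ξ₂, hξ₂, rfl⟩ a b ha hb hab
      exact ⟨a • ξ₁ + b • ξ₂, hXconv hξ₁ hξ₂ ha hb hab, (hφA ξ₁ ξ₂ a b ha hb hab)⟩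
    have hAcomp : IsCompact A := hXcomp.image hφcont
    set N : Set (↥s → ℝ) := {y | ∀ i, y i ≤ 0} with hN
    have hNconv : Convex ℝ N := by
      intro y hy z hz a b ha hb hab i
      have h1 : a * y i ≤ 0 := mul_nonpos_iff.mpr (Or.inl ⟨ha, hy i⟩)
      have h2 : b * z i ≤ 0 := mul_nonpos_iff.mpr (Or.inl ⟨hb, hz i⟩)
      simpa [smul_eq_mul] using add_nonpos h1 h2
    have hNclosed : IsClosed N := by
      have hEq : N = ⋂ i, (fun y : ↥s → ℝ => y i) ⁻¹' Set.Iic 0 := by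
        ext y; simp [hN, Set.mem_iInter]
      rw [hEq]
      exact isClosed_iInter fun i => isClosed_Iic.preimage (continuous_apply i)
    have hdisj : Disjoint A N := by
      rw [Set.disjoint_left]
      rintro _ ⟨ξ, hξ, rfl⟩ hmem
      obtain ⟨g, hg, hpos⟩ := hcon ξ hξ
      exact absurd (hmem ⟨g, hg⟩) (not_le.mpr hpos)
    obtain ⟨f, u, v, hfu, huv, hfv⟩ :=
      geometric_hahn_banach_compact_closed hAconv hAcomp hNconv hNclosed hdisj
    have hv0 : v < 0 := by
      have h0 : (0 : ↥s → ℝ) ∈ N := fun i => le_refl 0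
      simpa using hfv 0 h0
    -- the separating coefficients
    set lam : ↥s → ℝ := fun i => -(f (Pi.single i 1)) with hlam
    have hlam_nonneg : ∀ i, 0 ≤ lam i := by
      intro i
      by_contra hneg
      push_neg at hneg
      have hc : 0 < f (Pi.single i 1) := by
        have : lam i < 0 := hneg
        simpa [hlam, neg_neg] using neg_pos.mpr this
      set c : ℝ := f (Pi.single i 1) with hcdef
      have hcne : c ≠ 0 := ne_of_gt hc
      set t : ℝ := (1 - v) / c with ht
      have htpos : 0 ≤ t := div_nonneg (by linarith) hc.le
      have hmem : (-t) • Pi.single i (1 : ℝ) ∈ N := by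
        intro j
        rcases eq_or_ne j i with rfl | hji
        · simp [Pi.single_eq_same, htpos]
        · simp [Pi.single_eq_of_ne hji]
      have hlt := hfv _ hmem
      rw [map_smul] at hlt
      have hcalc : (-t) • f (Pi.single i 1) = v - 1 := by
        rw [smul_eq_mul, ht, ← hcdef]
        field_simp
        ring
      rw [hcalc] at hlt
      linarith
    -- linear functionals on `↥s → ℝ` are given by their values on basis vectors
    have hrep : ∀ y : ↥s → ℝ, f y = ∑ i, y i * f (Pi.single i 1) := by
      intro y
      have hy : y = ∑ i, y i • Pi.single i (1 : ℝ) := by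
        funext j
        simp [Finset.sum_apply, Pi.single_apply, mul_ite]
      conv_lhs => rw [hy]
      rw [map_sum]
      refine Finset.sum_congr rfl fun i _ => ?_
      rw [map_smul, smul_eq_mul]
    have hsum_pos : ∀ ξ ∈ X, -v < ∑ i, lam i * H ξ (i : F) := by
      intro ξ hξ
      have h1 : f (φ ξ) < v := lt_trans (hfu _ ⟨ξ, hξ, rfl⟩) huv
      rw [hrep] at h1
      have hEq : ∑ i, (φ ξ) i * f (Pi.single i 1) = -∑ i, lam i * H ξ (i : F) := by
        rw [← Finset.sum_neg_distrib]
        refine Finset.sum_congr rfl fun i _ => ?_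
        simp only [hlam, φ]
        ring
      rw [hEq] at h1
      linarith
    set Λ : ℝ := ∑ i, lam i with hΛ
    obtain ⟨ξ₀, hξ₀⟩ := hXne
    have hΛpos : 0 < Λ := by
      rcases lt_or_eq_of_le (Finset.sum_nonneg fun i _ => hlam_nonneg i : (0:ℝ) ≤ Λ) with h | h
      · exact h
      · exfalso
        have hz : ∀ i ∈ Finset.univ, lam i = 0 :=
          (Finset.sum_eq_zero_iff_of_nonneg fun i _ => hlam_nonneg i).mp h.symm
        have hpp := hsum_pos ξ₀ hξ₀
        rw [Finset.sum_eq_zero fun i hi => by rw [hz i hi, zero_mul]] at hpp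
        linarith
    -- the bad element of G
    set μ : ↥s → ℝ := fun i => lam i / Λ with hμ
    have hμnonneg : ∀ i, 0 ≤ μ i := fun i => div_nonneg (hlam_nonneg i) hΛpos.le
    have hμsum : ∑ i, μ i = 1 := by
      simp only [hμ]
      rw [← Finset.sum_div, ← hΛ]
      exact div_self hΛpos.ne'
    set gstar : F := ∑ i, μ i • (i : F) with hgstar
    have hgstarG : gstar ∈ G :=
      hGconv.sum_mem (fun i _ => hμnonneg i) hμsum (fun i _ => hsG i.2)
    -- affinity of `H ξ` on finite convex combinations
    have haffsum : ∀ ξ : E, H ξ gstar = ∑ i, μ i * H ξ (i : F) := by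
      intro ξ
      have hcv : ConvexOn ℝ Set.univ (H ξ) :=
        ⟨convex_univ, fun x _ y _ a b ha hb hab => by
          simp only [smul_eq_mul]
          exact le_of_eq (hHaff₂ ξ x y a b ha hb hab)⟩
      have hcc : ConcaveOn ℝ Set.univ (H ξ) :=
        ⟨convex_univ, fun x _ y _ a b ha hb hab => by
          simp only [smul_eq_mul]
          exact ge_of_eq (hHaff₂ ξ x y a b ha hb hab)⟩
      have h1 := hcv.map_sum_le (fun i _ => hμnonneg i) hμsum
        (fun i _ => Set.mem_univ ((i : ↥s) : F))
      have h2 := hcc.le_map_sum (fun i _ => hμnonneg i) hμsum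
        (fun i _ => Set.mem_univ ((i : ↥s) : F))
      simp only [smul_eq_mul] at h1 h2
      exact le_antisymm h1 h2
    have hpos : ∀ ξ ∈ X, -v / Λ < H ξ gstar := by
      intro ξ hξ
      rw [haffsum]
      have hEq : ∑ i, μ i * H ξ (i : F) = (∑ i, lam i * H ξ (i : F)) / Λ := by
        rw [Finset.sum_div]
        refine Finset.sum_congr rfl fun i _ => ?_
        simp only [hμ]
        ring
      rw [hEq, div_lt_div_iff₀ hΛpos hΛpos]
      exact mul_lt_mul_of_pos_right (hsum_pos ξ hξ) hΛpos
    have hfinal := hsupinf gstar hgstarG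
    have hbound : -v / Λ ≤ sInf ((fun ξ => H ξ gstar) '' X) := by
      apply le_csInf (Set.Nonempty.image _ ⟨ξ₀, hξ₀⟩)
      rintro b ⟨ξ, hξ, rfl⟩
      exact (hpos ξ hξ).le
    have hposc : 0 < -v / Λ := div_pos (by linarith) hΛpos
    linarith
  -- Globalize via compactness (finite intersection property).
  let t : ↥G → Set E := fun g => {ξ | H ξ (g : F) ≤ 0}
  have htc : ∀ g : ↥G, IsClosed (t g) := fun g =>
    isClosed_le (hHcont₁ (g : F)) continuous_const
  have hfin : ∀ u : Finset ↥G, (X ∩ ⋂ g ∈ u, t g).Nonempty := by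
    intro u
    obtain ⟨ξ, hξX, hξ⟩ := key (u.image Subtype.val) (by
      intro g hg
      rw [Finset.coe_image] at hg
      obtain ⟨g', _, rfl⟩ := hg
      exact g'.2)
    refine ⟨ξ, hξX, ?_⟩
    simp only [Set.mem_iInter]
    intro g hg
    exact hξ (g : F) (Finset.mem_image_of_mem _ hg)
  obtain ⟨ξstar, hξX, hξI⟩ := hXcomp.inter_iInter_nonempty t htc hfin
  exact ⟨ξstar, hξX, fun g hg => Set.mem_iInter.mp hξI ⟨g, hg⟩⟩
end

section
/- Subdifferential of AV@R at 0: for α ∈ (0,1], the subdifferential of AV@R_α at Z = 0 on L¹(Ω,ℝ), identified with a subset of L∞(Ω,ℝ), equals {ξ ∈ L∞(Ω,ℝ) : 0 ≤ ξ ≤ 1/α a.s. and E[ξ] = 1}; in particular, for every ξ in this set and every Z ∈ L¹(Ω,ℝ), E[ξZ] ≤ AV@R_α(Z). -/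
open MeasureTheory

section Aux

variable {Ω : Type*} [MeasurableSpace Ω] {μ : Measure Ω} [IsProbabilityMeasure μ]

lemma aux_int_max (Z : Lp ℝ 1 μ) (t : ℝ) :
    Integrable (fun ω => max (Z ω - t) 0) μ :=
  ((L1.integrable_coeFn Z).sub (integrable_const t)).pos_part

lemma aux_avar_le {α : ℝ} (hα : α ∈ Set.Ioc (0 : ℝ) 1) (Z : Lp ℝ 1 μ) (t : ℝ) :
    avar μ α Z ≤ t + α⁻¹ * ∫ ω, max (Z ω - t) 0 ∂μ := by
  have hα1 : (1 : ℝ) ≤ α⁻¹ := (one_le_inv₀ hα.1).mpr hα.2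
  apply csInf_le
  · refine ⟨∫ ω, Z ω ∂μ, ?_⟩
    rintro x ⟨s, rfl⟩
    have hI : Integrable (fun ω => max (Z ω - s) 0) μ := aux_int_max Z s
    have h1 : ∫ ω, (Z ω - s) ∂μ ≤ ∫ ω, max (Z ω - s) 0 ∂μ :=
      integral_mono ((L1.integrable_coeFn Z).sub (integrable_const s)) hI
        fun ω => le_max_left _ _
    have h2 : ∫ ω, (Z ω - s) ∂μ = (∫ ω, Z ω ∂μ) - s := by
      rw [integral_sub (L1.integrable_coeFn Z) (integrable_const s), integral_const]
      simp
    have h3 : 0 ≤ ∫ ω, max (Z ω - s) 0 ∂μ :=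
      integral_nonneg fun ω => le_max_right _ _
    nlinarith
  · exact ⟨t, rfl⟩

lemma aux_le_avar {α : ℝ} (hα : α ∈ Set.Ioc (0 : ℝ) 1) (ξ : Lp ℝ ⊤ μ)
    (h0 : ∀ᵐ ω ∂μ, 0 ≤ ξ ω ∧ ξ ω ≤ 1 / α) (h1 : ∫ ω, ξ ω ∂μ = 1)
    (Z : Lp ℝ 1 μ) : ∫ ω, ξ ω * Z ω ∂μ ≤ avar μ α Z := by
  refine le_csInf ⟨_, 0, rfl⟩ ?_
  rintro x ⟨t, rfl⟩
  have hZ : Integrable (fun ω => Z ω) μ := L1.integrable_coeFn Z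
  have hmeasξ : AEStronglyMeasurable (fun ω => ξ ω) μ := Lp.aestronglyMeasurable ξ
  have hξZ : Integrable (fun ω => ξ ω * Z ω) μ := by
    refine Integrable.mono' (hZ.norm.const_mul α⁻¹) (hmeasξ.mul (Lp.aestronglyMeasurable Z)) ?_
    filter_upwards [h0] with ω hω
    rw [norm_mul]
    have : ‖ξ ω‖ ≤ α⁻¹ := by
      rw [Real.norm_eq_abs, abs_of_nonneg hω.1, ← one_div]; exact hω.2
    exact mul_le_mul_of_nonneg_right this (norm_nonneg _) |>.trans_eq rfl
  have hξZt : Integrable (fun ω => ξ ω * (Z ω - t)) μ := by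
    refine Integrable.mono' (((hZ.sub (integrable_const t)).norm).const_mul α⁻¹)
      (hmeasξ.mul ((Lp.aestronglyMeasurable Z).sub aestronglyMeasurable_const)) ?_
    filter_upwards [h0] with ω hω
    rw [norm_mul]
    have : ‖ξ ω‖ ≤ α⁻¹ := by
      rw [Real.norm_eq_abs, abs_of_nonneg hω.1, ← one_div]; exact hω.2
    exact mul_le_mul_of_nonneg_right this (norm_nonneg _)
  have hξ : Integrable (fun ω => ξ ω) μ := (Lp.memLp ξ).integrable le_top
  have hmax : Integrable (fun ω => max (Z ω - t) 0) μ := aux_int_max Z t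
  have key : ∫ ω, ξ ω * (Z ω - t) ∂μ ≤ ∫ ω, α⁻¹ * max (Z ω - t) 0 ∂μ := by
    refine integral_mono_ae hξZt (hmax.const_mul _) ?_
    filter_upwards [h0] with ω hω
    calc ξ ω * (Z ω - t) ≤ ξ ω * max (Z ω - t) 0 :=
          mul_le_mul_of_nonneg_left (le_max_left _ _) hω.1
      _ ≤ α⁻¹ * max (Z ω - t) 0 := by
          refine mul_le_mul_of_nonneg_right ?_ (le_max_right _ _)
          rw [← one_div]; exact hω.2
  have hsplit : ∫ ω, ξ ω * (Z ω - t) ∂μ = (∫ ω, ξ ω * Z ω ∂μ) - t := by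
    have : (fun ω => ξ ω * (Z ω - t)) = fun ω => ξ ω * Z ω - ξ ω * t := by
      funext ω; ring
    rw [this, integral_sub hξZ (hξ.mul_const t), integral_mul_const, h1, one_mul]
  rw [integral_const_mul] at key
  linarith

end Aux

/-- Subdifferential of `AV@R_α` at `0`: for `α ∈ (0,1]`, the set of `ξ ∈ L∞(Ω,ℝ)` with
`E[ξZ] ≤ AV@R_α(Z)` for all `Z ∈ L¹` equals `{ξ : 0 ≤ ξ ≤ 1/α a.s. and E[ξ] = 1}`;
in particular every `ξ` in the latter set satisfies `E[ξZ] ≤ AV@R_α(Z)` for all `Z`. -/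
theorem avar_subdifferential_at_zero
    {Ω : Type*} [MeasurableSpace Ω] (μ : Measure Ω) [IsProbabilityMeasure μ]
    (α : ℝ) (hα : α ∈ Set.Ioc (0 : ℝ) 1) :
    {ξ : Lp ℝ ⊤ μ | ∀ Z : Lp ℝ 1 μ, ∫ ω, ξ ω * Z ω ∂μ ≤ avar μ α Z} =
      {ξ : Lp ℝ ⊤ μ | (∀ᵐ ω ∂μ, 0 ≤ ξ ω ∧ ξ ω ≤ 1 / α) ∧ ∫ ω, ξ ω ∂μ = 1} := by
  classical
  ext ξ
  simp only [Set.mem_setOf_eq]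
  constructor
  · intro h
    have hα0 : (0 : ℝ) < α := hα.1
    have hξ : Integrable (fun ω => ξ ω) μ := (Lp.memLp ξ).integrable le_top
    -- bound on set integrals from indicator test functions
    have hset : ∀ s : Set Ω, MeasurableSet s →
        0 ≤ ∫ ω in s, ξ ω ∂μ ∧ ∫ ω in s, ξ ω ∂μ ≤ α⁻¹ * (μ s).toReal := by
      intro s hs
      set ZS : Lp ℝ 1 μ := indicatorConstLp 1 hs (measure_ne_top μ s) (1 : ℝ) with hZS
      have hcoe : ⇑ZS =ᵐ[μ] s.indicator fun _ => (1 : ℝ) := indicatorConstLp_coeFn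
      have hint1 : ∫ ω, ξ ω * ZS ω ∂μ = ∫ ω in s, ξ ω ∂μ := by
        rw [← integral_indicator hs]
        refine integral_congr_ae ?_
        filter_upwards [hcoe] with ω hω
        rw [hω, Set.indicator_apply, Set.indicator_apply]
        by_cases hmem : ω ∈ s <;> simp [hmem]
      constructor
      · -- use Z = -ZS
        have hneg : ∫ ω, ξ ω * (-ZS) ω ∂μ = -∫ ω in s, ξ ω ∂μ := by
          rw [← hint1, ← integral_neg]
          refine integral_congr_ae ?_
          filter_upwards [Lp.coeFn_neg ZS] with ω hω
          rw [hω, Pi.neg_apply]; ring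
        have h2 := (h (-ZS)).trans (aux_avar_le hα (-ZS) 0)
        have h3 : ∫ ω, max ((-ZS) ω - 0) 0 ∂μ = 0 := by
          refine integral_eq_zero_of_ae ?_
          filter_upwards [Lp.coeFn_neg ZS, hcoe] with ω hω hω2
          rw [hω, Pi.neg_apply, hω2, sub_zero, Pi.zero_apply]
          by_cases hmem : ω ∈ s <;> simp [hmem]
        rw [h3, hneg] at h2
        simp only [mul_zero, add_zero, zero_add] at h2
        linarith
      · have h2 := (h ZS).trans (aux_avar_le hα ZS 0)
        have h3 : ∫ ω, max (ZS ω - 0) 0 ∂μ = (μ s).toReal := by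
          rw [show (μ s).toReal = μ.real s from rfl, ← integral_indicator_one hs]
          refine integral_congr_ae ?_
          filter_upwards [hcoe] with ω hω
          rw [hω, sub_zero]
          by_cases hmem : ω ∈ s <;> simp [hmem]
        rw [h3, hint1] at h2
        linarith
    have hnonneg : ∀ᵐ ω ∂μ, 0 ≤ ξ ω := by
      have := ae_nonneg_of_forall_setIntegral_nonneg hξ
        (fun s hs _ => (hset s hs).1)
      filter_upwards [this] with ω hω using hω
    have hub : ∀ᵐ ω ∂μ, ξ ω ≤ 1 / α := by
      have := ae_nonneg_of_forall_setIntegral_nonneg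
        ((integrable_const α⁻¹).sub hξ) (fun s hs _ => by
          simp only [Pi.sub_apply]
          rw [integral_sub (integrable_const α⁻¹).integrableOn hξ.integrableOn,
            setIntegral_const, smul_eq_mul, mul_comm]
          have h5 := (hset s hs).2
          rw [← Measure.real] at h5
          linarith)
      filter_upwards [this] with ω hω
      rw [one_div]
      simpa [sub_nonneg] using hω
    -- total integral equals 1 via constant test functions
    have huniv := hset Set.univ MeasurableSet.univ
    rw [setIntegral_univ] at huniv
    have hone : ∫ ω, ξ ω ∂μ = 1 := by
      -- upper bound: Z = const 1, t = 1
      set Z1 : Lp ℝ 1 μ := indicatorConstLp 1 MeasurableSet.univ (measure_ne_top μ _) (1 : ℝ)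
        with hZ1
      have hcoe1 : ⇑Z1 =ᵐ[μ] fun _ => (1 : ℝ) := by
        filter_upwards [indicatorConstLp_coeFn (μ := μ) (p := 1)
          (hs := MeasurableSet.univ) (hμs := measure_ne_top μ _) (c := (1:ℝ))] with ω hω
        rw [hω, Set.indicator_univ]
      have hintZ1 : ∫ ω, ξ ω * Z1 ω ∂μ = ∫ ω, ξ ω ∂μ := by
        refine integral_congr_ae ?_
        filter_upwards [hcoe1] with ω hω
        rw [hω, mul_one]
      have hub1 := (h Z1).trans (aux_avar_le hα Z1 1)
      have hmax1 : ∫ ω, max (Z1 ω - 1) 0 ∂μ = 0 := by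
        refine integral_eq_zero_of_ae ?_
        filter_upwards [hcoe1] with ω hω
        simp [hω]
      rw [hmax1, hintZ1] at hub1
      simp only [mul_zero, add_zero] at hub1
      -- lower bound: Z = -Z1, t = -1
      have hlb1 := (h (-Z1)).trans (aux_avar_le hα (-Z1) (-1))
      have hmax2 : ∫ ω, max ((-Z1) ω - (-1)) 0 ∂μ = 0 := by
        refine integral_eq_zero_of_ae ?_
        filter_upwards [Lp.coeFn_neg Z1, hcoe1] with ω hω hω2
        rw [hω, Pi.neg_apply, hω2]
        simp
      have hintZ1' : ∫ ω, ξ ω * (-Z1) ω ∂μ = -∫ ω, ξ ω ∂μ := by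
        rw [← hintZ1, ← integral_neg]
        refine integral_congr_ae ?_
        filter_upwards [Lp.coeFn_neg Z1] with ω hω
        rw [hω, Pi.neg_apply]; ring
      rw [hmax2, hintZ1'] at hlb1
      simp only [mul_zero, add_zero] at hlb1
      linarith
    exact ⟨hnonneg.and hub, hone⟩
  · rintro ⟨h0, h1⟩ Z
    exact aux_le_avar hα ξ h0 h1 Z
end
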